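/- Let Ω = {A₁, A₂, …, A_v} be a family of v distinct nonempty subsets of a v-set V, and let Ωᵢ = f_{Aᵢ}(Ω). Then the equivalence class of Ω under ∼ is exactly {Ω} ∪ {Ωᵢ : i = 1, 2, …, v}. -/
import Mathlib


open scoped symmDiff

/-- Block complementation of a family of blocks with respect to a block `A`:
the new family is `{A} ∪ {A ∆ B : B ∈ L, B ≠ A}`. -/
def blockComp {α : Type*} [DecidableEq α] (A : Finset α) (L : Finset (Finset α)) :
    Finset (Finset α) :=
  insert A ((L.erase A).image (fun B => A ∆ B))

/-- The replication number of a point `x`: the number of blocks of `L` containing `x`. -/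
def repl {α : Type*} [DecidableEq α] (L : Finset (Finset α)) (x : α) : ℕ :=
  (L.filter (fun B => x ∈ B)).card

/-- A Ryser design on point set `X` with block family `L` and index `lam`. -/
def IsRyserDesign {α : Type*} [DecidableEq α] (X : Finset α) (L : Finset (Finset α))
    (lam : ℕ) : Prop :=
  1 ≤ lam ∧ L.card = X.card ∧ (∀ B ∈ L, B ⊆ X) ∧
    (∀ B₁ ∈ L, ∀ B₂ ∈ L, B₁ ≠ B₂ → (B₁ ∩ B₂).card = lam) ∧
    (∀ B ∈ L, lam < B.card) ∧
    (∃ B₁ ∈ L, ∃ B₂ ∈ L, B₁.card ≠ B₂.card)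

/-- A symmetric design on point set `X` with block family `L`, block size `k` and index `lam`. -/
def IsSymmetricDesign {α : Type*} [DecidableEq α] (X : Finset α) (L : Finset (Finset α))
    (k lam : ℕ) : Prop :=
  1 ≤ lam ∧ L.card = X.card ∧ (∀ B ∈ L, B ⊆ X) ∧
    (∀ B₁ ∈ L, ∀ B₂ ∈ L, B₁ ≠ B₂ → (B₁ ∩ B₂).card = lam) ∧
    (∀ B ∈ L, B.card = k) ∧ lam < k

/-- A family of `|V|` distinct nonempty subsets of the finite set `V`
(distinctness is built into `Finset`). -/
def GoodFamily {α : Type*} [DecidableEq α] (V : Finset α) (L : Finset (Finset α)) : Prop :=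
  L.card = V.card ∧ ∀ B ∈ L, B ⊆ V ∧ B.Nonempty

/-- One step: either the identity map `g`, or block complementation with respect to a
member of the current family. -/
def RStep {α : Type*} [DecidableEq α] (L L' : Finset (Finset α)) : Prop :=
  L' = L ∨ ∃ A ∈ L, L' = blockComp A L

lemma mem_blockComp {α : Type*} [DecidableEq α] {A X : Finset α} {L : Finset (Finset α)} :
    X ∈ blockComp A L ↔ X = A ∨ ∃ C ∈ L, C ≠ A ∧ X = A ∆ C := by
  simp only [blockComp, Finset.mem_insert, Finset.mem_image, Finset.mem_erase]
  constructor
  · rintro (h | ⟨C, ⟨hCA, hC⟩, rfl⟩)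
    · exact Or.inl h
    · exact Or.inr ⟨C, hC, hCA, rfl⟩
  · rintro (h | ⟨C, hC, hCA, rfl⟩)
    · exact Or.inl h
    · exact Or.inr ⟨C, ⟨hCA, hC⟩, rfl⟩

lemma symmDiff_ne_self {α : Type*} [DecidableEq α] {A B : Finset α} (hB : B.Nonempty) :
    A ∆ B ≠ A := by
  rw [Ne, symmDiff_eq_left, Finset.bot_eq_empty]
  exact hB.ne_empty

lemma blockComp_blockComp_self {α : Type*} [DecidableEq α] {A : Finset α}
    {L : Finset (Finset α)} (hA : A ∈ L) (hne : ∀ B ∈ L, B.Nonempty) :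
    blockComp A (blockComp A L) = L := by
  ext X
  rw [mem_blockComp]
  constructor
  · rintro (rfl | ⟨C, hC, hCA, rfl⟩)
    · exact hA
    · rw [mem_blockComp] at hC
      rcases hC with rfl | ⟨D, hD, hDA, rfl⟩
      · exact absurd rfl hCA
      · rwa [symmDiff_symmDiff_cancel_left]
  · intro hX
    by_cases hXA : X = A
    · exact Or.inl hXA
    · refine Or.inr ⟨A ∆ X, ?_, symmDiff_ne_self (hne X hX), by rw [symmDiff_symmDiff_cancel_left]⟩
      exact mem_blockComp.2 (Or.inr ⟨X, hX, hXA, rfl⟩)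

lemma blockComp_blockComp {α : Type*} [DecidableEq α] {A B : Finset α}
    {L : Finset (Finset α)} (hA : A ∈ L) (hB : B ∈ L) (hBA : B ≠ A)
    (hne : ∀ C ∈ L, C.Nonempty) :
    blockComp (A ∆ B) (blockComp A L) = blockComp B L := by
  have hAB : A ∆ B ≠ A := symmDiff_ne_self (hne B hB)
  ext X
  rw [mem_blockComp, mem_blockComp]
  constructor
  · rintro (rfl | ⟨D, hD, hDAB, rfl⟩)
    · exact Or.inr ⟨A, hA, Ne.symm hBA, symmDiff_comm A B⟩
    · rw [mem_blockComp] at hD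
      rcases hD with rfl | ⟨C, hC, hCA, rfl⟩
      · left
        ext x; simp [Finset.mem_symmDiff]
      · have hCB : C ≠ B := by
          rintro rfl; exact hDAB rfl
        refine Or.inr ⟨C, hC, hCB, ?_⟩
        ext x; simp [Finset.mem_symmDiff]; tauto
  · rintro (rfl | ⟨C, hC, hCB, rfl⟩)
    · refine Or.inr ⟨A, mem_blockComp.2 (Or.inl rfl), Ne.symm hAB, ?_⟩
      ext x; simp [Finset.mem_symmDiff]
    · by_cases hCA : C = A
      · subst hCA
        left; exact symmDiff_comm B C
      · refine Or.inr ⟨A ∆ C, mem_blockComp.2 (Or.inr ⟨C, hC, hCA, rfl⟩), ?_, ?_⟩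
        · intro h
          exact hCB ((symmDiff_right_injective A) h ▸ rfl)
        · ext x; simp [Finset.mem_symmDiff]; tauto

/-- The equivalence class of a family `Ω = {A₁, …, A_v}` of `v` distinct nonempty
subsets of a `v`-set `V` (the families reachable from `Ω` by sequences of identity maps
and block complementations) is exactly `{Ω} ∪ {f_{Aᵢ}(Ω) : i = 1, …, v}`. -/
theorem equivalence_class_eq {α : Type*} [DecidableEq α] (V : Finset α)
    (L : Finset (Finset α)) (hL : GoodFamily V L) (M : Finset (Finset α)) :
    Relation.ReflTransGen RStep L M ↔ (M = L ∨ ∃ A ∈ L, M = blockComp A L) := by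
  have hne : ∀ C ∈ L, C.Nonempty := fun C hC => (hL.2 C hC).2
  constructor
  · intro h
    induction h with
    | refl => exact Or.inl rfl
    | tail _ hstep ih =>
      rename_i M' M _
      rcases hstep with rfl | ⟨A', hA', rfl⟩
      · exact ih
      · rcases ih with rfl | ⟨A, hA, rfl⟩
        · exact Or.inr ⟨A', hA', rfl⟩
        · rw [mem_blockComp] at hA'
          rcases hA' with rfl | ⟨C, hC, hCA, rfl⟩
          · exact Or.inl (blockComp_blockComp_self hA hne)
          · exact Or.inr ⟨C, hC, blockComp_blockComp hA hC hCA hne⟩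
  · rintro (rfl | ⟨A, hA, rfl⟩)
    · exact Relation.ReflTransGen.refl
    · exact Relation.ReflTransGen.single (Or.inr ⟨A, hA, rfl⟩)
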